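/- Let k ≥ 4 and let N₈ = {(v,M) ∈ AGL₂(ℤ/2^kℤ) : v ≡ 0 (mod 8) and M ≡ I (mod 8)}, a finite 2-group. Then the Frattini subgroup Φ(N₈) contains N₁₆ = {(v,M) ∈ AGL₂(ℤ/2^kℤ) : v ≡ 0 (mod 16) and M ≡ I (mod 16)}. -/

import Mathlib

open scoped MatrixGroups

/-- The entry pattern identifying `AGL₂(ℤ/nℤ)` inside `GL₃(ℤ/nℤ)`:
third column equal to `(0,0,1)ᵀ`. -/
def AGLShape {n : ℕ} (g : GL (Fin 3) (ZMod n)) : Prop :=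
  (g : Matrix (Fin 3) (Fin 3) (ZMod n)) 0 2 = 0 ∧
  (g : Matrix (Fin 3) (Fin 3) (ZMod n)) 1 2 = 0 ∧
  (g : Matrix (Fin 3) (Fin 3) (ZMod n)) 2 2 = 1

/-!
Every element `g = 1 + 16 C` of `N₁₆` is the square of an element of `N₈`: since
`(1 + 8 B)² = 1 + 16 (B + 4 B²)`, it suffices to solve `B + 4 B² = C`, and the iteration
`B ↦ C - 4 B²` stabilises because `4` is nilpotent in `ℤ/2^kℤ`. Its limit lies in the left ideal
generated by `C`, so `1 + 8 B` keeps the affine shape. Finally `N₈` is a finite `2`-group. A maximal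
subgroup `M` of a finite `p`-group is normal, and if `g ^ p ∉ M` then maximality puts the image of
`g` in `G ⧸ M` inside the subgroup generated by its own `p`-th power, which in a `p`-group forces it
to be trivial. So squares lie in every maximal subgroup of `N₈`, hence in its Frattini subgroup.
-/

namespace IsPGroup

variable {p : ℕ} [Fact p.Prime] {G : Type*} [Group G]

theorem eq_one_of_mem_zpowers_pow (hG : IsPGroup p G) {g : G}
    (hg : g ∈ Subgroup.zpowers (g ^ p)) : g = 1 := by
  by_contra hne
  obtain ⟨j, hj⟩ := Subgroup.mem_zpowers_iff.mp hg
  have hord : (orderOf g : ℤ) ∣ p * j - 1 := by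
    rw [orderOf_dvd_iff_zpow_eq_one, zpow_sub_one, zpow_mul, zpow_natCast, hj, mul_inv_cancel]
  have hp : (p : ℤ) ∣ 1 := by
    have := (Int.natCast_dvd_natCast.mpr (hG.dvd_orderOf hne)).trans hord
    simpa using (dvd_sub_right (dvd_mul_right _ _)).mp this
  exact (Fact.out : p.Prime).one_lt.ne' (by exact_mod_cast Int.eq_one_of_dvd_one (by positivity) hp)

theorem pow_mem_of_isCoatom [Finite G] (hG : IsPGroup p G) {M : Subgroup G} (hM : IsCoatom M)
    (g : G) : g ^ p ∈ M := by
  have : Group.IsNilpotent G := hG.isNilpotent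
  have : M.Normal :=
    Subgroup.NormalizerCondition.normal_of_coatom M Group.normalizerCondition_of_isNilpotent hM
  set φ := QuotientGroup.mk' M
  by_contra hgM
  have hlt : M < (Subgroup.zpowers (φ g ^ p)).comap φ := by
    refine SetLike.lt_iff_le_and_exists.mpr ⟨fun m hm => ?_, g ^ p, ?_, hgM⟩
    · simp [Subgroup.mem_comap, φ, (QuotientGroup.eq_one_iff m).mpr hm]
    · simp [Subgroup.mem_comap]
  have hg : φ g ∈ Subgroup.zpowers (φ g ^ p) := by
    rw [← Subgroup.mem_comap, hM.2 _ hlt]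
    trivial
  apply hgM
  rw [← QuotientGroup.eq_one_iff, ← QuotientGroup.mk'_apply, map_pow,
    (hG.to_quotient M).eq_one_of_mem_zpowers_pow hg, one_pow]

theorem pow_mem_frattini [Finite G] (hG : IsPGroup p G) (g : G) : g ^ p ∈ frattini G :=
  Subgroup.mem_iInf.mpr fun _ => Subgroup.mem_iInf.mpr fun hM => hG.pow_mem_of_isCoatom hM g

end IsPGroup

section Algebra

variable {R A : Type*} [CommRing R] [Ring A] [Algebra R A]

theorem one_add_smul_sq (a : R) (x : A) :
    (1 + a • x) ^ 2 = 1 + (2 * a) • x + (a * a) • (x * x) := by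
  rw [sq, add_mul, mul_add, mul_add, one_mul, mul_one, one_mul, smul_mul_smul_comm, two_mul,
    add_smul]
  abel

theorem exists_one_add_two_smul_pow_two_pow (y : A) (j : ℕ) :
    ∃ z : A, (1 + (2 : R) • y) ^ 2 ^ j = 1 + (2 : R) ^ (j + 1) • z := by
  induction j with
  | zero => exact ⟨y, by simp⟩
  | succ j ih =>
    obtain ⟨z, hz⟩ := ih
    refine ⟨z + (2 : R) ^ j • (z * z), ?_⟩
    rw [pow_succ, pow_mul, hz, one_add_smul_sq, smul_add, smul_smul, add_assoc]
    congr 3 <;> ring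

theorem one_add_two_smul_pow_two_pow_eq_one {n : ℕ} (h2 : (2 : R) ^ n = 0) (y : A) :
    (1 + (2 : R) • y) ^ 2 ^ n = 1 := by
  obtain ⟨z, hz⟩ := exists_one_add_two_smul_pow_two_pow (R := R) y n
  rw [hz, pow_succ, h2, zero_mul, zero_smul, add_zero]

theorem IsNilpotent.isUnit_one_add_smul {t : R} (ht : IsNilpotent t) (x : A) :
    IsUnit (1 + t • x) := by
  obtain ⟨n, hn⟩ := ht
  exact IsNilpotent.isUnit_one_add ⟨n, by rw [smul_pow, hn, zero_smul]⟩

noncomputable def quadraticIter (t : R) (c : A) : ℕ → A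
  | 0 => 0
  | j + 1 => c - t • (quadraticIter t c j * quadraticIter t c j)

/-- Consecutive terms of `quadraticIter t c` differ by a multiple of `t ^ j`, so the iteration
becomes stationary at a solution once `t ^ j = 0`. -/
theorem exists_add_smul_mul_self_eq {t : R} (ht : IsNilpotent t) (c : A) :
    ∃ b ∈ Submodule.span A {c}, b + t • (b * b) = c := by
  obtain ⟨n, hn⟩ := ht
  set s := quadraticIter t c
  have hstep : ∀ j, ∃ f, s (j + 1) - s j = t ^ j • f := by
    intro j
    induction j with
    | zero => exact ⟨c, by simp [s, quadraticIter]⟩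
    | succ j ih =>
      obtain ⟨f, hf⟩ := ih
      refine ⟨-(s (j + 1) * f + f * s j), ?_⟩
      have hdiff : s (j + 2) - s (j + 1) =
          -(t • (s (j + 1) * (s (j + 1) - s j) + (s (j + 1) - s j) * s j)) := by
        show (c - t • (s (j + 1) * s (j + 1))) - (c - t • (s j * s j)) = _
        rw [mul_sub, sub_mul, smul_add, smul_sub, smul_sub]
        abel
      rw [hdiff, hf, mul_smul_comm, smul_mul_assoc, ← smul_add, smul_smul, ← smul_neg,
        ← pow_succ', neg_add]
  have hmem : ∀ j, s j ∈ Submodule.span A {c} := by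
    intro j
    induction j with
    | zero => exact Submodule.zero_mem _
    | succ j ih =>
      refine Submodule.sub_mem _ (Submodule.mem_span_singleton_self c) ?_
      rw [Algebra.smul_def]
      exact Submodule.smul_mem _ _ (Submodule.smul_mem _ _ ih)
  obtain ⟨f, hf⟩ := hstep n
  rw [hn, zero_smul, sub_eq_zero] at hf
  have hfix : s n = c - t • (s n * s n) := hf.symm
  exact ⟨s n, hmem n, eq_sub_iff_add_eq.mp hfix⟩

end Algebra

theorem ZMod.natCast_mul_natCast_val_div {n m : ℕ} [NeZero n] (h : m ∣ n) {a : ZMod n}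
    (ha : ZMod.castHom h (ZMod m) a = 0) : (m : ZMod n) * ((a.val / m : ℕ) : ZMod n) = a := by
  rw [ZMod.castHom_apply, ZMod.cast_eq_val, ZMod.natCast_eq_zero_iff] at ha
  rw [← Nat.cast_mul, Nat.mul_div_cancel' ha, ZMod.natCast_zmod_val]

theorem ZMod.two_pow_self_eq_zero (k : ℕ) : (2 : ZMod (2 ^ k)) ^ k = 0 := by
  exact_mod_cast ZMod.natCast_self (2 ^ k)

theorem ZMod.isNilpotent_two_mul (k : ℕ) (a : ZMod (2 ^ k)) : IsNilpotent (2 * a) :=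
  Commute.isNilpotent_mul_right (Commute.all _ _) ⟨k, ZMod.two_pow_self_eq_zero k⟩

namespace Matrix

theorem mul_apply_eq_zero_of_forall {ι R : Type*} [Fintype ι] [NonUnitalNonAssocSemiring R]
    (A : Matrix ι ι R) {B : Matrix ι ι R} {j : ι} (hB : ∀ i, B i j = 0) (i : ι) :
    (A * B) i j = 0 := by
  simp [mul_apply, hB]

variable {ι : Type*} [DecidableEq ι] {n m : ℕ}

theorem exists_eq_one_add_smul_of_map_castHom_eq_one [NeZero n] (h : m ∣ n)
    {X : Matrix ι ι (ZMod n)} (hX : X.map (ZMod.castHom h (ZMod m)) = 1) :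
    ∃ C : Matrix ι ι (ZMod n), X = 1 + (m : ZMod n) • C ∧ ∀ i j, (X - 1) i j = 0 → C i j = 0 := by
  refine ⟨(X - 1).map fun a => ((a.val / m : ℕ) : ZMod n), ?_, fun i j hij => by simp [hij]⟩
  ext i j
  have hij : ZMod.castHom h (ZMod m) ((X - 1) i j) = 0 := by
    have hXij := congrFun (congrFun hX i) j
    rw [map_apply] at hXij
    rw [sub_apply, map_sub, hXij]
    rcases eq_or_ne i j with rfl | hne <;> simp [*]
  rw [add_apply, smul_apply, map_apply, smul_eq_mul, ZMod.natCast_mul_natCast_val_div h hij,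
    sub_apply, add_sub_cancel]

theorem map_castHom_one_add_smul_eq_one (h : m ∣ n) (C : Matrix ι ι (ZMod n)) :
    (1 + (m : ZMod n) • C).map (ZMod.castHom h (ZMod m)) = 1 := by
  ext i j
  rcases eq_or_ne i j with rfl | hne <;> simp [*]

theorem GeneralLinearGroup.pow_two_pow_eq_one_of_map_castHom_eq_one [Fintype ι] {k : ℕ}
    (h8 : 8 ∣ 2 ^ k) {g : GL ι (ZMod (2 ^ k))}
    (hg : (g : Matrix ι ι (ZMod (2 ^ k))).map (ZMod.castHom h8 (ZMod 8)) = 1) :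
    g ^ 2 ^ k = 1 := by
  obtain ⟨C, hgC, -⟩ := exists_eq_one_add_smul_of_map_castHom_eq_one h8 hg
  have h8C : ((8 : ℕ) : ZMod (2 ^ k)) • C = (2 : ZMod (2 ^ k)) • ((4 : ZMod (2 ^ k)) • C) := by
    rw [smul_smul]
    norm_num
  ext1
  rw [Units.val_pow_eq_pow_val, hgC, h8C,
    one_add_two_smul_pow_two_pow_eq_one (ZMod.two_pow_self_eq_zero k), Units.val_one]

end Matrix

theorem aglShape_iff {n : ℕ} (g : GL (Fin 3) (ZMod n)) :
    AGLShape g ↔ ∀ i, ((g : Matrix (Fin 3) (Fin 3) (ZMod n)) - 1) i 2 = 0 := by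
  simp [AGLShape, Fin.forall_fin_succ, sub_eq_zero, Matrix.one_apply]

theorem exists_sq_eq_of_aglShape {k : ℕ} (h8 : 8 ∣ 2 ^ k) (h16 : 16 ∣ 2 ^ k)
    {g : GL (Fin 3) (ZMod (2 ^ k))} (hg : AGLShape g)
    (hg16 : (g : Matrix (Fin 3) (Fin 3) (ZMod (2 ^ k))).map (ZMod.castHom h16 (ZMod 16)) = 1) :
    ∃ h : GL (Fin 3) (ZMod (2 ^ k)), (AGLShape h ∧
      (h : Matrix (Fin 3) (Fin 3) (ZMod (2 ^ k))).map (ZMod.castHom h8 (ZMod 8)) = 1) ∧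
      h ^ 2 = g := by
  obtain ⟨C, hgC, hC0⟩ := Matrix.exists_eq_one_add_smul_of_map_castHom_eq_one h16 hg16
  obtain ⟨B, hBC, hB⟩ := exists_add_smul_mul_self_eq (ZMod.isNilpotent_two_mul k 2) C
  have hBcol : ∀ i, B i 2 = 0 := by
    obtain ⟨A, rfl⟩ := Submodule.mem_span_singleton.mp hBC
    exact Matrix.mul_apply_eq_zero_of_forall A fun i => hC0 i 2 ((aglShape_iff g).mp hg i)
  have hu := (ZMod.isNilpotent_two_mul k 4).isUnit_one_add_smul B
  refine ⟨hu.unit, ⟨(aglShape_iff _).mpr fun i => ?_, ?_⟩, ?_⟩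
  · simp [hBcol]
  · rw [hu.unit_spec]
    exact_mod_cast Matrix.map_castHom_one_add_smul_eq_one h8 B
  · ext1
    rw [Units.val_pow_eq_pow_val, hu.unit_spec, one_add_smul_sq, hgC, ← hB, smul_add, smul_smul,
      add_assoc]
    norm_num

/-- Let `k ≥ 4` and let `N₈ = {(v,M) ∈ AGL₂(ℤ/2^kℤ) : v ≡ 0 (mod 8), M ≡ I (mod 8)}`
(here given as a subgroup `N` with exactly that carrier, i.e. the AGL-shaped matrices
reducing to the identity mod 8).  Then the Frattini subgroup `Φ(N₈)` contains
`N₁₆ = {(v,M) ∈ AGL₂(ℤ/2^kℤ) : v ≡ 0 (mod 16), M ≡ I (mod 16)}`. -/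
theorem stmt_1 (k : ℕ) (hk : 4 ≤ k)
    (N : Subgroup (GL (Fin 3) (ZMod (2 ^ k))))
    (hN : ∀ g : GL (Fin 3) (ZMod (2 ^ k)), g ∈ N ↔
      (AGLShape g ∧
        (g : Matrix (Fin 3) (Fin 3) (ZMod (2 ^ k))).map
          (ZMod.castHom
            (by have h := pow_dvd_pow 2 (show 3 ≤ k by omega); norm_num at h; exact h :
              (8 : ℕ) ∣ 2 ^ k) (ZMod 8)) = 1)) :
    ∀ g : GL (Fin 3) (ZMod (2 ^ k)), AGLShape g →
      (g : Matrix (Fin 3) (Fin 3) (ZMod (2 ^ k))).map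
        (ZMod.castHom
          (by have h := pow_dvd_pow 2 (show 4 ≤ k by omega); norm_num at h; exact h :
            (16 : ℕ) ∣ 2 ^ k) (ZMod 16)) = 1 →
      ∀ hg : g ∈ N, (⟨g, hg⟩ : N) ∈ frattini N := by
  intro g hg hg16 hgN
  have hN2 : IsPGroup 2 N := fun z =>
    ⟨k, Subtype.ext (Matrix.GeneralLinearGroup.pow_two_pow_eq_one_of_map_castHom_eq_one _
      ((hN z).mp z.2).2)⟩
  obtain ⟨h, hhN, rfl⟩ := exists_sq_eq_of_aglShape _ _ hg hg16
  have hsq : (⟨h ^ 2, hgN⟩ : N) = ⟨h, (hN h).mpr hhN⟩ ^ 2 := rfl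
  rw [hsq]
  exact hN2.pow_mem_frattini _
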